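/- Let G be a connected, non-complete strongly regular graph with parameters (n,d,a,c), where d ≥ 3, a ≠ 0, and c > 0, and let D be the distance matrix of the bipartite double cover B(G). Set Δ = (a-c)² + 4(d-c), λ₁ = ((a-c) + √Δ)/2, λ₂ = ((a-c) - √Δ)/2, and let m₁, m₂ be natural numbers satisfying m₁ = ((n-1) - (2d + (n-1)(a-c))/√Δ)/2 and m₂ = ((n-1) + (2d + (n-1)(a-c))/√Δ)/2 (as real numbers). Then the characteristic polynomial of D over ℝ equals (X - (-2d + 5n - 2)) · (X - (2d - n - 2)) · (X - (2λ₁ - 2))^{m₁} · (X - (2λ₂ - 2))^{m₂} · (X - (-2λ₂ - 2))^{m₂} · (X - (-2λ₁ - 2))^{m₁}. -/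

import Mathlib

open SimpleGraph

/-- The bipartite double cover of a graph `G`, on vertex set `V ⊕ V`. -/
def bipartiteDoubleCover {V : Type*} (G : SimpleGraph V) : SimpleGraph (V ⊕ V) where
  Adj x y :=
    match x, y with
    | Sum.inl u, Sum.inr v => G.Adj u v
    | Sum.inr u, Sum.inl v => G.Adj u v
    | _, _ => False
  symm := ⟨by
    rintro (u | u) (v | v) h
    · exact h.elim
    · exact h.symm
    · exact h.symm
    · exact h.elim⟩
  loopless := ⟨by
    rintro (u | u) h
    · exact h
    · exact h⟩

/-- The distance matrix of a graph `H`, over the reals. -/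
noncomputable def distMatrix {W : Type*} (H : SimpleGraph W) : Matrix W W ℝ :=
  Matrix.of fun x y => (H.dist x y : ℝ)

open Polynomial

section AuxMatrix

open Matrix

variable {m R : Type*} [Fintype m] [DecidableEq m] [CommRing R]

lemma aux_det_PQQP (M N : Matrix m m R) :
    (Matrix.fromBlocks M N N M).det = (M + N).det * (M - N).det := by
  have h1 : Matrix.fromBlocks (1 : Matrix m m R) 0 1 1 *
      (Matrix.fromBlocks M N N M * Matrix.fromBlocks (1 : Matrix m m R) 0 (-1) 1) =
      Matrix.fromBlocks (M - N) N 0 (M + N) := by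
    rw [Matrix.fromBlocks_multiply, Matrix.fromBlocks_multiply]
    rw [Matrix.fromBlocks_inj]
    refine ⟨by noncomm_ring, by noncomm_ring, by noncomm_ring, by noncomm_ring⟩
  have h2 := congrArg Matrix.det h1
  rw [Matrix.det_mul, Matrix.det_mul, Matrix.det_fromBlocks_zero₁₂,
    Matrix.det_fromBlocks_zero₁₂, Matrix.det_fromBlocks_zero₂₁] at h2
  simp at h2
  rw [h2]; ring

lemma aux_charmatrix_add_right (S T : Matrix m m R) :
    charmatrix (S + T) = charmatrix S - T.map C := by
  simp [charmatrix, Matrix.map_add, sub_add_eq_sub_sub]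

lemma aux_charpoly_PQQP (P Q : Matrix m m R) :
    (Matrix.fromBlocks P Q Q P).charpoly = (P + Q).charpoly * (P - Q).charpoly := by
  rw [Matrix.charpoly, charmatrix_fromBlocks, Matrix.charpoly, Matrix.charpoly, aux_det_PQQP]
  have e1 : charmatrix P + -Q.map C = charmatrix (P + Q) := by
    rw [aux_charmatrix_add_right]; abel
  have e2 : charmatrix P - -Q.map C = charmatrix (P - Q) := by
    have h := aux_charmatrix_add_right (P - Q) Q
    simp only [sub_add_cancel] at h
    rw [h]; abel
  rw [e1, e2]

lemma aux_charpoly_conj (U M : Matrix m m ℝ) (hU : U * star U = 1) (hU' : star U * U = 1) :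
    (U * M * star U).charpoly = M.charpoly := by
  have key : charmatrix (U * M * star U) =
      (U.map C) * charmatrix M * ((star U).map C) := by
    rw [charmatrix, charmatrix]
    rw [mul_sub, sub_mul]
    congr 1
    · rw [Matrix.scalar_apply, ← Matrix.smul_one_eq_diagonal]
      rw [mul_smul_comm, smul_mul_assoc, mul_one, ← Matrix.map_mul, hU,
        Matrix.map_one _ (by simp) (by simp)]
    · simp [RingHom.mapMatrix_apply, ← Matrix.map_mul]
  rw [Matrix.charpoly, key, Matrix.det_mul, Matrix.det_mul, Matrix.charpoly]
  have : (U.map C).det * ((star U).map C).det = 1 := by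
    rw [mul_comm, ← Matrix.det_mul, ← Matrix.map_mul, hU', Matrix.map_one _ (by simp) (by simp),
      Matrix.det_one]
  calc (U.map C).det * (charmatrix M).det * ((star U).map C).det
      = (charmatrix M).det * ((U.map C).det * ((star U).map C).det) := by ring
    _ = (charmatrix M).det := by rw [this, mul_one]

lemma aux_charpoly_diagonal (v : m → ℝ) :
    (Matrix.diagonal v).charpoly = ∏ i, (X - C (v i)) := by
  rw [Matrix.charpoly]
  have : charmatrix (Matrix.diagonal v) = Matrix.diagonal (fun i => X - C (v i)) := by
    ext i j
    by_cases h : i = j <;> simp [h, charmatrix_apply_ne, Matrix.diagonal_apply_ne]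
  rw [this, Matrix.det_diagonal]

section spectral
variable (A : Matrix m m ℝ) (hA : A.IsHermitian)

lemma aux_A_spectral :
    A = (hA.eigenvectorUnitary : Matrix m m ℝ) * diagonal hA.eigenvalues *
      star (hA.eigenvectorUnitary : Matrix m m ℝ) := by
  conv_lhs => rw [hA.spectral_theorem]
  simp [RCLike.ofReal_real_eq_id, Function.comp]

lemma aux_U_mul_star : (hA.eigenvectorUnitary : Matrix m m ℝ) *
    star (hA.eigenvectorUnitary : Matrix m m ℝ) = 1 :=
  (Matrix.mem_unitaryGroup_iff).mp (hA.eigenvectorUnitary).2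

lemma aux_star_mul_U : star (hA.eigenvectorUnitary : Matrix m m ℝ) *
    (hA.eigenvectorUnitary : Matrix m m ℝ) = 1 :=
  (Matrix.mem_unitaryGroup_iff').mp (hA.eigenvectorUnitary).2

lemma aux_conj_mul_conj (U D₁ D₂ : Matrix m m ℝ) (h' : star U * U = 1) :
    (U * D₁ * star U) * (U * D₂ * star U) = U * (D₁ * D₂) * star U := by
  calc (U * D₁ * star U) * (U * D₂ * star U)
      = U * (D₁ * ((star U * U) * (D₂ * star U))) := by
        simp only [mul_assoc]
    _ = U * (D₁ * D₂) * star U := by rw [h']; simp only [one_mul, mul_assoc]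

lemma aux_quad_eq_conj (α β γ : ℝ) :
    α • (A * A) + β • A + γ • (1 : Matrix m m ℝ) =
      (hA.eigenvectorUnitary : Matrix m m ℝ) *
        diagonal (fun i => α * (hA.eigenvalues i) ^ 2 + β * hA.eigenvalues i + γ) *
        star (hA.eigenvectorUnitary : Matrix m m ℝ) := by
  set U := (hA.eigenvectorUnitary : Matrix m m ℝ) with hU
  have hUs : U * star U = 1 := aux_U_mul_star A hA
  have hAe := aux_A_spectral A hA
  rw [← hU] at hAe
  set D := diagonal hA.eigenvalues with hD
  conv_lhs => rw [hAe]
  rw [aux_conj_mul_conj _ _ _ (aux_star_mul_U A hA)]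
  have step : α • (U * (D * D) * star U) + β • (U * D * star U) + γ • (1 : Matrix m m ℝ)
      = U * (α • (D * D) + β • D + γ • 1) * star U := by
    simp only [Matrix.mul_add, Matrix.add_mul, mul_smul_comm, smul_mul_assoc, mul_one, hUs]
  rw [step]
  congr 1
  congr 1
  rw [hD, diagonal_mul_diagonal]
  ext i j
  rcases eq_or_ne i j with h | h
  · subst h
    simp [Matrix.diagonal_apply_eq, Matrix.one_apply_eq, sq]
  · simp [Matrix.diagonal_apply_ne _ h, Matrix.one_apply_ne h]

lemma aux_charpoly_quad (α β γ : ℝ) :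
    (α • (A * A) + β • A + γ • (1 : Matrix m m ℝ)).charpoly =
      ∏ i, (X - C (α * (hA.eigenvalues i) ^ 2 + β * hA.eigenvalues i + γ)) := by
  rw [aux_quad_eq_conj A hA α β γ,
    aux_charpoly_conj _ _ (aux_U_mul_star A hA) (aux_star_mul_U A hA), aux_charpoly_diagonal]

lemma aux_eigen_root (δ p q : ℝ)
    (h : (A - δ • 1) * (A * A - p • A - q • (1 : Matrix m m ℝ)) = 0) (i : m) :
    (hA.eigenvalues i - δ) * ((hA.eigenvalues i) ^ 2 - p * hA.eigenvalues i - q) = 0 := by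
  set U := (hA.eigenvectorUnitary : Matrix m m ℝ) with hU
  have e1 : A - δ • 1 = U * diagonal (fun i => hA.eigenvalues i - δ) * star U := by
    have h' := aux_quad_eq_conj A hA 0 1 (-δ)
    simp only [zero_smul, one_smul, zero_add, neg_smul, ← sub_eq_add_neg] at h'
    rw [h', ← hU]
    congr 1
    congr 1
    exact congrArg _ (funext fun j => by ring)
  have e2 : A * A - p • A - q • (1 : Matrix m m ℝ) =
      U * diagonal (fun i => (hA.eigenvalues i) ^ 2 - p * hA.eigenvalues i - q) * star U := by
    have h' := aux_quad_eq_conj A hA 1 (-p) (-q)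
    simp only [one_smul, neg_smul, ← sub_eq_add_neg] at h'
    rw [h', ← hU]
    congr 1
    congr 1
    exact congrArg _ (funext fun j => by ring)
  rw [e1, e2, aux_conj_mul_conj _ _ _ (aux_star_mul_U A hA), diagonal_mul_diagonal] at h
  set g := fun i => (hA.eigenvalues i - δ) * ((hA.eigenvalues i) ^ 2 - p * hA.eigenvalues i - q)
    with hg
  have key : diagonal g = star U * (U * diagonal g * star U) * U := by
    calc diagonal g = (star U * U) * diagonal g * (star U * U) := by
          rw [aux_star_mul_U A hA]; simp
      _ = star U * (U * diagonal g * star U) * U := by simp only [mul_assoc]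
  rw [← hU] at h
  rw [h] at key
  simp only [Matrix.mul_zero, Matrix.zero_mul] at key
  have := congrFun (congrFun key i) i
  simpa [hg] using this

lemma aux_trace_eigen : ∑ i, hA.eigenvalues i = Matrix.trace A := by
  conv_rhs => rw [aux_A_spectral A hA]
  rw [Matrix.trace_mul_cycle, aux_star_mul_U A hA, one_mul, Matrix.trace_diagonal]

lemma aux_trace_eigen_sq : ∑ i, hA.eigenvalues i * hA.eigenvalues i = Matrix.trace (A * A) := by
  have hAe := aux_A_spectral A hA
  conv_rhs => rw [hAe]
  rw [aux_conj_mul_conj _ _ _ (aux_star_mul_U A hA), Matrix.trace_mul_cycle,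
    aux_star_mul_U A hA, one_mul, diagonal_mul_diagonal, Matrix.trace_diagonal]

end spectral

end AuxMatrix

section AuxSplit

open Finset

variable {m : Type*} [Fintype m] [DecidableEq m]

lemma aux_filter_split (e : m → ℝ) (x y z : ℝ)
    (hxy : x ≠ y) (hxz : x ≠ z) (hyz : y ≠ z)
    (hcover : ∀ i, e i = x ∨ e i = y ∨ e i = z) :
    ∀ {M : Type*} [CommMonoid M] (F : ℝ → M),
    ∏ i, F (e i) = F x ^ (univ.filter fun i => e i = x).card *
      (F y ^ (univ.filter fun i => e i = y).card *
      F z ^ (univ.filter fun i => e i = z).card) := by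
  intro M _ F
  classical
  have h1 := Finset.prod_filter_mul_prod_filter_not univ (fun i => e i = x) (fun i => F (e i))
  have h2 := Finset.prod_filter_mul_prod_filter_not (univ.filter fun i => ¬ e i = x)
    (fun i => e i = y) (fun i => F (e i))
  have hy : (univ.filter fun i => ¬ e i = x).filter (fun i => e i = y) =
      univ.filter fun i => e i = y := by
    ext i
    simp only [mem_filter, mem_univ, true_and]
    constructor
    · rintro ⟨_, h⟩; exact h
    · intro h; exact ⟨fun hx => hxy (hx ▸ h ▸ rfl), h⟩
  have hz : (univ.filter fun i => ¬ e i = x).filter (fun i => ¬ e i = y) =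
      univ.filter fun i => e i = z := by
    ext i
    simp only [mem_filter, mem_univ, true_and]
    constructor
    · rintro ⟨hx, hy'⟩
      rcases hcover i with h | h | h
      · exact absurd h hx
      · exact absurd h hy'
      · exact h
    · intro h
      exact ⟨fun hx => hxz (hx ▸ h ▸ rfl), fun hy' => hyz (hy' ▸ h ▸ rfl)⟩
  have hconst : ∀ (w : ℝ), ∏ i ∈ univ.filter (fun i => e i = w), F (e i) =
      F w ^ (univ.filter fun i => e i = w).card := by
    intro w
    rw [← Finset.prod_const]
    exact Finset.prod_congr rfl fun i hi => by rw [(Finset.mem_filter.mp hi).2]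
  rw [hy, hz] at h2
  rw [← h1, ← h2, hconst, hconst, hconst]

lemma aux_filter_split_sum (e : m → ℝ) (x y z : ℝ)
    (hxy : x ≠ y) (hxz : x ≠ z) (hyz : y ≠ z)
    (hcover : ∀ i, e i = x ∨ e i = y ∨ e i = z) (F : ℝ → ℝ) :
    ∑ i, F (e i) = ((univ.filter fun i => e i = x).card : ℝ) * F x +
      ((univ.filter fun i => e i = y).card : ℝ) * F y +
      ((univ.filter fun i => e i = z).card : ℝ) * F z := by
  classical
  have h1 := Finset.sum_filter_add_sum_filter_not univ (fun i => e i = x) (fun i => F (e i))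
  have h2 := Finset.sum_filter_add_sum_filter_not (univ.filter fun i => ¬ e i = x)
    (fun i => e i = y) (fun i => F (e i))
  have hy : (univ.filter fun i => ¬ e i = x).filter (fun i => e i = y) =
      univ.filter fun i => e i = y := by
    ext i
    simp only [mem_filter, mem_univ, true_and]
    exact ⟨fun ⟨_, h⟩ => h, fun h => ⟨fun hx => hxy (hx ▸ h ▸ rfl), h⟩⟩
  have hz : (univ.filter fun i => ¬ e i = x).filter (fun i => ¬ e i = y) =
      univ.filter fun i => e i = z := by
    ext i
    simp only [mem_filter, mem_univ, true_and]
    constructor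
    · rintro ⟨hx, hy'⟩
      rcases hcover i with h | h | h
      · exact absurd h hx
      · exact absurd h hy'
      · exact h
    · intro h
      exact ⟨fun hx => hxz (hx ▸ h ▸ rfl), fun hy' => hyz (hy' ▸ h ▸ rfl)⟩
  have hconst : ∀ (w : ℝ), ∑ i ∈ univ.filter (fun i => e i = w), F (e i) =
      ((univ.filter fun i => e i = w).card : ℝ) * F w := by
    intro w
    rw [Finset.sum_congr rfl (fun i hi => by rw [(Finset.mem_filter.mp hi).2]),
      Finset.sum_const, nsmul_eq_mul]
  rw [hy, hz] at h2
  rw [← h1, ← h2, hconst, hconst, hconst]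
  ring

end AuxSplit

section AuxGraph

variable {V : Type*} (G : SimpleGraph V)

def sSide : V ⊕ V → ZMod 2 := Sum.elim (fun _ => 0) (fun _ => 1)

lemma bdc_adj_inl_inr {u v : V} :
    (_root_.bipartiteDoubleCover G).Adj (Sum.inl u) (Sum.inr v) ↔ G.Adj u v := Iff.rfl

lemma bdc_adj_inr_inl {u v : V} :
    (_root_.bipartiteDoubleCover G).Adj (Sum.inr u) (Sum.inl v) ↔ G.Adj u v := Iff.rfl

lemma walk_parity {x y : V ⊕ V} (p : (_root_.bipartiteDoubleCover G).Walk x y) :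
    (p.length : ZMod 2) = sSide x + sSide y := by
  induction p with
  | nil => simp [CharTwo.add_self_eq_zero]
  | @cons x z y h p ih =>
    rw [SimpleGraph.Walk.length_cons]
    push_cast
    rw [ih]
    have hxz : sSide x = sSide z + 1 := by
      rcases x with u | u <;> rcases z with w | w
      · exact h.elim
      · simp only [sSide, Sum.elim_inl, Sum.elim_inr]; decide
      · simp only [sSide, Sum.elim_inl, Sum.elim_inr]; decide
      · exact h.elim
    rw [hxz]; ring

lemma dist_parity {x y : V ⊕ V} (h : (_root_.bipartiteDoubleCover G).Reachable x y) :
    ((_root_.bipartiteDoubleCover G).dist x y : ZMod 2) = sSide x + sSide y := by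
  obtain ⟨p, hp⟩ := h.exists_walk_length_eq_dist
  rw [← hp]
  exact walk_parity G p

lemma dist_inl_inl (hG : ∀ x y : V, x ≠ y → ∃ w, G.Adj x w ∧ G.Adj y w)
    {u v : V} (huv : u ≠ v) : (_root_.bipartiteDoubleCover G).dist (Sum.inl u) (Sum.inl v) = 2 := by
  obtain ⟨w, h1, h2⟩ := hG u v huv
  let p : (_root_.bipartiteDoubleCover G).Walk (Sum.inl u) (Sum.inl v) :=
    SimpleGraph.Walk.cons ((bdc_adj_inl_inr G).mpr h1)
      (SimpleGraph.Walk.cons ((bdc_adj_inr_inl G).mpr h2.symm) SimpleGraph.Walk.nil)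
  have hle : (_root_.bipartiteDoubleCover G).dist (Sum.inl u) (Sum.inl v) ≤ 2 :=
    SimpleGraph.dist_le p
  have hreach : (_root_.bipartiteDoubleCover G).Reachable (Sum.inl u) (Sum.inl v) := ⟨p⟩
  have hpos : 0 < (_root_.bipartiteDoubleCover G).dist (Sum.inl u) (Sum.inl v) :=
    hreach.pos_dist_of_ne (by simp [huv])
  have hpar := dist_parity G hreach
  simp only [sSide, Sum.elim_inl, add_zero] at hpar
  have heven : (2 : ℕ) ∣ (_root_.bipartiteDoubleCover G).dist (Sum.inl u) (Sum.inl v) :=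
    (ZMod.natCast_eq_zero_iff _ 2).mp (by simpa using hpar)
  omega

lemma dist_inr_inr (hG : ∀ x y : V, x ≠ y → ∃ w, G.Adj x w ∧ G.Adj y w)
    {u v : V} (huv : u ≠ v) : (_root_.bipartiteDoubleCover G).dist (Sum.inr u) (Sum.inr v) = 2 := by
  obtain ⟨w, h1, h2⟩ := hG u v huv
  let p : (_root_.bipartiteDoubleCover G).Walk (Sum.inr u) (Sum.inr v) :=
    SimpleGraph.Walk.cons ((bdc_adj_inr_inl G).mpr h1)
      (SimpleGraph.Walk.cons ((bdc_adj_inl_inr G).mpr h2.symm) SimpleGraph.Walk.nil)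
  have hle : (_root_.bipartiteDoubleCover G).dist (Sum.inr u) (Sum.inr v) ≤ 2 :=
    SimpleGraph.dist_le p
  have hreach : (_root_.bipartiteDoubleCover G).Reachable (Sum.inr u) (Sum.inr v) := ⟨p⟩
  have hpos : 0 < (_root_.bipartiteDoubleCover G).dist (Sum.inr u) (Sum.inr v) :=
    hreach.pos_dist_of_ne (by simp [huv])
  have hpar := dist_parity G hreach
  simp only [sSide, Sum.elim_inr] at hpar
  have heven : (2 : ℕ) ∣ (_root_.bipartiteDoubleCover G).dist (Sum.inr u) (Sum.inr v) :=
    (ZMod.natCast_eq_zero_iff _ 2).mp (by rw [hpar]; decide)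
  omega

lemma dist_inl_inr_adj {u v : V} (h : G.Adj u v) :
    (_root_.bipartiteDoubleCover G).dist (Sum.inl u) (Sum.inr v) = 1 :=
  SimpleGraph.dist_eq_one_iff_adj.mpr h

lemma dist_inr_inl_adj {u v : V} (h : G.Adj u v) :
    (_root_.bipartiteDoubleCover G).dist (Sum.inr u) (Sum.inl v) = 1 :=
  SimpleGraph.dist_eq_one_iff_adj.mpr ((bdc_adj_inr_inl G).mpr h)

lemma dist_inl_inr_not_adj {u v : V} (hnadj : ¬ G.Adj u v)
    (hw : ∃ w x, G.Adj u w ∧ G.Adj w x ∧ G.Adj x v) :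
    (_root_.bipartiteDoubleCover G).dist (Sum.inl u) (Sum.inr v) = 3 := by
  obtain ⟨w, x, h1, h2, h3⟩ := hw
  let p : (_root_.bipartiteDoubleCover G).Walk (Sum.inl u) (Sum.inr v) :=
    SimpleGraph.Walk.cons ((bdc_adj_inl_inr G).mpr h1)
      (SimpleGraph.Walk.cons ((bdc_adj_inr_inl G).mpr h2)
        (SimpleGraph.Walk.cons ((bdc_adj_inl_inr G).mpr h3) SimpleGraph.Walk.nil))
  have hle : (_root_.bipartiteDoubleCover G).dist (Sum.inl u) (Sum.inr v) ≤ 3 :=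
    SimpleGraph.dist_le p
  have hreach : (_root_.bipartiteDoubleCover G).Reachable (Sum.inl u) (Sum.inr v) := ⟨p⟩
  have hne1 : (_root_.bipartiteDoubleCover G).dist (Sum.inl u) (Sum.inr v) ≠ 1 := fun h1' =>
    hnadj ((bdc_adj_inl_inr G).mp (SimpleGraph.dist_eq_one_iff_adj.mp h1'))
  have hpar := dist_parity G hreach
  simp only [sSide, Sum.elim_inl, Sum.elim_inr, zero_add] at hpar
  have hodd : ¬ (2 : ℕ) ∣ (_root_.bipartiteDoubleCover G).dist (Sum.inl u) (Sum.inr v) := by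
    intro hdvd
    have := (ZMod.natCast_eq_zero_iff _ 2).mpr hdvd
    rw [hpar] at this
    exact one_ne_zero this
  omega

lemma dist_inr_inl_not_adj {u v : V} (hnadj : ¬ G.Adj u v)
    (hw : ∃ w x, G.Adj v w ∧ G.Adj w x ∧ G.Adj x u) :
    (_root_.bipartiteDoubleCover G).dist (Sum.inr u) (Sum.inl v) = 3 := by
  rw [SimpleGraph.dist_comm]
  exact dist_inl_inr_not_adj G (fun h => hnadj h.symm) hw

end AuxGraph

set_option maxHeartbeats 1600000 in
theorem stmt14 {V : Type*} [Fintype V] [DecidableEq V] (G : SimpleGraph V)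
    [DecidableRel G.Adj] (n d a c : ℕ)
    (hd : 3 ≤ d) (ha : a ≠ 0) (hc : 0 < c)
    (hconn : G.Connected) (hnc : G ≠ ⊤) (hsrg : G.IsSRGWith n d a c)
    (Δ lam₁ lam₂ : ℝ)
    (hΔ : Δ = ((a : ℝ) - c) ^ 2 + 4 * ((d : ℝ) - c))
    (hlam₁ : lam₁ = (((a : ℝ) - c) + Real.sqrt Δ) / 2)
    (hlam₂ : lam₂ = (((a : ℝ) - c) - Real.sqrt Δ) / 2)
    (m₁ m₂ : ℕ)
    (hm₁ : (m₁ : ℝ) =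
      (((n : ℝ) - 1) - (2 * d + ((n : ℝ) - 1) * ((a : ℝ) - c)) / Real.sqrt Δ) / 2)
    (hm₂ : (m₂ : ℝ) =
      (((n : ℝ) - 1) + (2 * d + ((n : ℝ) - 1) * ((a : ℝ) - c)) / Real.sqrt Δ) / 2) :
    (distMatrix (_root_.bipartiteDoubleCover G)).charpoly =
      (X - C (-2 * (d : ℝ) + 5 * n - 2)) * (X - C (2 * (d : ℝ) - n - 2)) *
        (X - C (2 * lam₁ - 2)) ^ m₁ * (X - C (2 * lam₂ - 2)) ^ m₂ *
        (X - C (-2 * lam₂ - 2)) ^ m₂ * (X - C (-2 * lam₁ - 2)) ^ m₁ := by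
  classical
  -- notation
  set A : Matrix V V ℝ := G.adjMatrix ℝ with hAdef
  have hA : A.IsHermitian := by
    rw [Matrix.IsHermitian, Matrix.conjTranspose_eq_transpose_of_trivial]
    exact G.isSymm_adjMatrix
  set ea : V → ℝ := hA.eigenvalues with heaDef
  set Jm : Matrix V V ℝ := Matrix.of (fun _ _ => (1 : ℝ)) with hJmDef
  -- basic numeric facts
  have hcardV : Fintype.card V = n := hsrg.card
  have hVne : Nonempty V := hconn.nonempty
  have hdeg : ∀ v : V, G.degree v = d := hsrg.regular
  obtain ⟨v₀⟩ := hVne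
  have hv₀ : ∃ w, G.Adj v₀ w := by
    rw [← SimpleGraph.degree_pos_iff_exists_adj]
    rw [hdeg]; omega
  obtain ⟨w₀, hw₀⟩ := hv₀
  have hadlt : a < d := by
    have h1 := hsrg.of_adj v₀ w₀ hw₀
    have h2 := hw₀.card_commonNeighbors_lt_degree
    rw [h1, hdeg] at h2
    exact h2
  have hpair : ∃ u v : V, u ≠ v ∧ ¬ G.Adj u v := by
    by_contra h
    push_neg at h
    apply hnc
    ext u v
    simp only [SimpleGraph.top_adj]
    exact ⟨fun h' => h'.ne, fun h' => h u v h'⟩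
  obtain ⟨u₀, u₁, hu01, hnadj01⟩ := hpair
  have hcd : c ≤ d := by
    have h1 := hsrg.of_not_adj hu01 hnadj01
    have h2 := G.card_commonNeighbors_le_degree_left u₀ u₁
    rw [h1, hdeg] at h2
    exact h2
  have hdn : d + 2 ≤ n := by
    have hsub : insert u₀ (insert u₁ (G.neighborFinset u₀)) ⊆ Finset.univ :=
      Finset.subset_univ _
    have hcard := Finset.card_le_card hsub
    rw [Finset.card_insert_of_notMem, Finset.card_insert_of_notMem] at hcard
    · rw [SimpleGraph.card_neighborFinset_eq_degree, hdeg, Finset.card_univ, hcardV] at hcard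
      omega
    · rw [SimpleGraph.mem_neighborFinset]
      exact hnadj01
    · simp only [Finset.mem_insert, SimpleGraph.mem_neighborFinset]
      push_neg
      exact ⟨hu01, G.loopless.irrefl u₀⟩
  have hn0 : 0 < n := by omega
  have hnR : (0:ℝ) < n := by exact_mod_cast hn0
  have hcR : (0:ℝ) < c := by exact_mod_cast hc
  have hcne : (c:ℝ) ≠ 0 := ne_of_gt hcR
  -- feasibility identity
  have hfeasN := SimpleGraph.IsSRGWith.param_eq G hsrg hn0
  have hfeas : (d:ℝ)^2 - ((a:ℝ) - c) * d - ((d:ℝ) - c) = (c:ℝ) * n := by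
    obtain ⟨t, ht⟩ : ∃ t, d = a + 1 + t := ⟨d - a - 1, by omega⟩
    obtain ⟨u, hu⟩ : ∃ u, n = d + 1 + u := ⟨n - d - 1, by omega⟩
    have e1 : d - a - 1 = t := by omega
    have e2 : n - d - 1 = u := by omega
    rw [e1, e2] at hfeasN
    have hftR : (d:ℝ) * t = (u:ℝ) * c := by exact_mod_cast congrArg (Nat.cast : ℕ → ℝ) hfeasN
    have htR : (d:ℝ) = (a:ℝ) + 1 + t := by exact_mod_cast congrArg (Nat.cast : ℕ → ℝ) ht
    have huR : (n:ℝ) = (d:ℝ) + 1 + u := by exact_mod_cast congrArg (Nat.cast : ℕ → ℝ) hu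
    linear_combination (d:ℝ) * htR + hftR - (c:ℝ) * huR
  -- discriminant facts
  have hcdR : (c:ℝ) ≤ d := by exact_mod_cast hcd
  have hadR : (a:ℝ) < d := by exact_mod_cast hadlt
  have hΔpos : 0 < Δ := by
    rw [hΔ]
    rcases lt_or_eq_of_le hcdR with h | h
    · nlinarith
    · have hac : (a:ℝ) - c ≠ 0 := by intro h'; rw [← h] at hadR; linarith
      have h1 : ((a:ℝ) - c)^2 > 0 := by positivity
      nlinarith
  have hs0 : 0 < Real.sqrt Δ := Real.sqrt_pos.mpr hΔpos
  have hsne : Real.sqrt Δ ≠ 0 := ne_of_gt hs0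
  have hs2 : Real.sqrt Δ ^ 2 = Δ := Real.sq_sqrt hΔpos.le
  have hlsum : lam₁ + lam₂ = (a:ℝ) - c := by rw [hlam₁, hlam₂]; ring
  have hlprod : lam₁ * lam₂ = (c:ℝ) - d := by
    have h' : Real.sqrt Δ ^ 2 = ((a : ℝ) - c) ^ 2 + 4 * ((d : ℝ) - c) := by rw [hs2, hΔ]
    rw [hlam₁, hlam₂]
    linear_combination (-(1:ℝ)/4) * h'
  have hlne : lam₁ ≠ lam₂ := by
    rw [hlam₁, hlam₂]
    intro h
    apply hsne
    linarith
  have hroot1 : lam₁ ^ 2 - ((a:ℝ) - c) * lam₁ - ((d:ℝ) - c) = 0 := by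
    linear_combination lam₁ * hlsum - hlprod
  have hroot2 : lam₂ ^ 2 - ((a:ℝ) - c) * lam₂ - ((d:ℝ) - c) = 0 := by
    linear_combination lam₂ * hlsum - hlprod
  have hcn : (0:ℝ) < (c:ℝ) * n := by positivity
  have hdl1 : (d:ℝ) ≠ lam₁ := by
    intro h
    have h0 : (c:ℝ) * n = 0 := by
      linear_combination -hfeas + hroot1 + ((lam₁ + (d:ℝ)) - ((a:ℝ) - c)) * h
    linarith
  have hdl2 : (d:ℝ) ≠ lam₂ := by
    intro h
    have h0 : (c:ℝ) * n = 0 := by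
      linear_combination -hfeas + hroot2 + ((lam₂ + (d:ℝ)) - ((a:ℝ) - c)) * h
    linarith
  -- SRG matrix identities
  have hcompl : Gᶜ.adjMatrix ℝ = Jm - 1 - A := by
    ext u v
    rcases eq_or_ne u v with h | h
    · subst h
      simp [hJmDef, hAdef]
    · by_cases hadj : G.Adj u v
      · simp [hJmDef, hAdef, SimpleGraph.compl_adj, h, hadj]
      · simp [hJmDef, hAdef, SimpleGraph.compl_adj, h, hadj]
  have hA2 : A * A = ((a:ℝ) - c) • A + ((d:ℝ) - c) • (1 : Matrix V V ℝ) + (c:ℝ) • Jm := by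
    have h := hsrg.matrix_eq (α := ℝ)
    rw [pow_two] at h
    rw [← hAdef] at h
    rw [h, hcompl]
    rw [← Nat.cast_smul_eq_nsmul ℝ d, ← Nat.cast_smul_eq_nsmul ℝ a, ← Nat.cast_smul_eq_nsmul ℝ c]
    module
  have hAJ : A * Jm = (d:ℝ) • Jm := by
    ext u v
    rw [Matrix.mul_apply]
    simp only [hJmDef, hAdef, Matrix.of_apply, SimpleGraph.adjMatrix_apply, mul_one,
      Matrix.smul_apply, smul_eq_mul]
    rw [Finset.sum_boole]
    have : Finset.univ.filter (fun x => G.Adj u x) = G.neighborFinset u := by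
      ext w; simp [SimpleGraph.mem_neighborFinset]
    rw [this, SimpleGraph.card_neighborFinset_eq_degree, hdeg]
  have hWzero : (A - (d:ℝ) • 1) *
      (A * A - ((a:ℝ) - c) • A - ((d:ℝ) - c) • (1 : Matrix V V ℝ)) = 0 := by
    have h2 : A * A - ((a:ℝ) - c) • A - ((d:ℝ) - c) • (1 : Matrix V V ℝ) = (c:ℝ) • Jm := by
      rw [hA2]; module
    rw [h2, Matrix.sub_mul, mul_smul_comm, hAJ]
    simp [smul_smul, mul_comm]
  have hcover : ∀ i : V, ea i = (d:ℝ) ∨ ea i = lam₁ ∨ ea i = lam₂ := by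
    intro i
    have h := aux_eigen_root A hA (d:ℝ) ((a:ℝ) - c) ((d:ℝ) - c) hWzero i
    have hfac : (ea i) ^ 2 - ((a:ℝ) - c) * ea i - ((d:ℝ) - c) =
        (ea i - lam₁) * (ea i - lam₂) := by
      linear_combination (ea i) * hlsum - hlprod
    rw [← heaDef] at h
    rw [hfac] at h
    rcases mul_eq_zero.mp h with h' | h'
    · left; linarith [sub_eq_zero.mp h']
    · rcases mul_eq_zero.mp h' with h'' | h''
      · right; left; exact sub_eq_zero.mp h''
      · right; right; exact sub_eq_zero.mp h''
  -- trace identities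
  have htrJ : Matrix.trace Jm = (n:ℝ) := by
    simp [Matrix.trace, hJmDef, Finset.card_univ, hcardV]
  have htrA : Matrix.trace A = 0 := by
    simp [hAdef]
  have htrA2 : Matrix.trace (A * A) = (n:ℝ) * d := by
    rw [hA2]
    simp only [Matrix.trace_add, Matrix.trace_smul, Matrix.trace_one, htrJ, htrA,
      Finset.card_univ, hcardV]
    simp only [smul_eq_mul]
    ring
  have hsum_ea : ∑ i, ea i = 0 := by
    rw [heaDef, aux_trace_eigen A hA, htrA]
  have hsum_ea2 : ∑ i, ea i * ea i = (n:ℝ) * d := by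
    rw [heaDef, aux_trace_eigen_sq A hA, htrA2]
  -- multiplicity counts
  set k0 := (Finset.univ.filter fun i => ea i = (d:ℝ)).card with hk0def
  set k1 := (Finset.univ.filter fun i => ea i = lam₁).card with hk1def
  set k2 := (Finset.univ.filter fun i => ea i = lam₂).card with hk2def
  have hE1 : (k0:ℝ) + k1 + k2 = n := by
    have h := aux_filter_split_sum ea (d:ℝ) lam₁ lam₂ hdl1 hdl2 hlne hcover (fun _ => (1:ℝ))
    simp only [mul_one] at h
    rw [← hk0def, ← hk1def, ← hk2def] at h
    rw [← h]
    rw [Finset.sum_const, Finset.card_univ, hcardV, nsmul_eq_mul, mul_one]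
  have hE2 : (k0:ℝ) * d + k1 * lam₁ + k2 * lam₂ = 0 := by
    have h := aux_filter_split_sum ea (d:ℝ) lam₁ lam₂ hdl1 hdl2 hlne hcover (fun t => t)
    rw [← hk0def, ← hk1def, ← hk2def] at h
    rw [← h, hsum_ea]
  have hE3 : (k0:ℝ) * ((d:ℝ) * d) + k1 * (lam₁ * lam₁) + k2 * (lam₂ * lam₂) = (n:ℝ) * d := by
    have h := aux_filter_split_sum ea (d:ℝ) lam₁ lam₂ hdl1 hdl2 hlne hcover (fun t => t * t)
    rw [← hk0def, ← hk1def, ← hk2def] at h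
    rw [← h, hsum_ea2]
  -- the conjectural multiplicities satisfy the same equations
  have hM1 : (1:ℝ) + m₁ + m₂ = n := by
    rw [hm₁, hm₂]; ring
  have hM2 : (1:ℝ) * d + m₁ * lam₁ + m₂ * lam₂ = 0 := by
    rw [hm₁, hm₂, hlam₁, hlam₂]
    field_simp
    ring
  have hM3 : (1:ℝ) * ((d:ℝ) * d) + m₁ * (lam₁ * lam₁) + m₂ * (lam₂ * lam₂) = (n:ℝ) * d := by
    have hq1 : lam₁ * lam₁ = ((a:ℝ) - c) * lam₁ + ((d:ℝ) - c) := by linear_combination hroot1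
    have hq2 : lam₂ * lam₂ = ((a:ℝ) - c) * lam₂ + ((d:ℝ) - c) := by linear_combination hroot2
    rw [hq1, hq2]
    have hM2' : (m₁:ℝ) * lam₁ + m₂ * lam₂ = -(d:ℝ) := by linarith [hM2]
    have hM1' : (m₁:ℝ) + m₂ = (n:ℝ) - 1 := by linarith [hM1]
    have expand : (1:ℝ) * ((d:ℝ) * d) + m₁ * (((a:ℝ) - c) * lam₁ + ((d:ℝ) - c)) +
        m₂ * (((a:ℝ) - c) * lam₂ + ((d:ℝ) - c)) =
        (d:ℝ) * d + ((a:ℝ) - c) * ((m₁:ℝ) * lam₁ + m₂ * lam₂) +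
          ((m₁:ℝ) + m₂) * ((d:ℝ) - c) := by ring
    rw [expand, hM2', hM1']
    linear_combination hfeas
  -- uniqueness of the solution
  have hx : (k0:ℝ) - 1 = 0 ∧ (k1:ℝ) - m₁ = 0 ∧ (k2:ℝ) - m₂ = 0 := by
    have e1 : ((k0:ℝ) - 1) + ((k1:ℝ) - m₁) + ((k2:ℝ) - m₂) = 0 := by
      linear_combination hE1 - hM1
    have e2 : (d:ℝ) * ((k0:ℝ) - 1) + lam₁ * ((k1:ℝ) - m₁) + lam₂ * ((k2:ℝ) - m₂) = 0 := by
      linear_combination hE2 - hM2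
    have e3 : (d:ℝ) * d * ((k0:ℝ) - 1) + lam₁ * lam₁ * ((k1:ℝ) - m₁) +
        lam₂ * lam₂ * ((k2:ℝ) - m₂) = 0 := by
      linear_combination hE3 - hM3
    have e4 : (lam₁ - d) * ((k1:ℝ) - m₁) + (lam₂ - d) * ((k2:ℝ) - m₂) = 0 := by
      linear_combination e2 - (d:ℝ) * e1
    have e6 : (lam₂ - d) * (lam₂ - lam₁) * ((k2:ℝ) - m₂) = 0 := by
      linear_combination e3 - (d:ℝ) * (d:ℝ) * e1 - (lam₁ + (d:ℝ)) * e4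
    have hz : (k2:ℝ) - m₂ = 0 := by
      rcases mul_eq_zero.mp e6 with h' | h'
      · exfalso
        rcases mul_eq_zero.mp h' with h'' | h''
        · exact hdl2 (by linarith [sub_eq_zero.mp h''])
        · exact hlne (by linarith [sub_eq_zero.mp h''])
      · exact h'
    have hy : (k1:ℝ) - m₁ = 0 := by
      rw [hz] at e4
      simp only [mul_zero, add_zero] at e4
      rcases mul_eq_zero.mp e4 with h' | h'
      · exact absurd (by linarith [sub_eq_zero.mp h'] : (d:ℝ) = lam₁) hdl1
      · exact h'
    have hxx : (k0:ℝ) - 1 = 0 := by rw [hz, hy] at e1; linarith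
    exact ⟨hxx, hy, hz⟩
  obtain ⟨hxk0, hxk1, hxk2⟩ := hx
  have hk0 : k0 = 1 := by
    have : (k0:ℝ) = ((1:ℕ):ℝ) := by push_cast; linarith
    exact_mod_cast this
  have hk1 : k1 = m₁ := by
    have : (k1:ℝ) = (m₁:ℝ) := by linarith
    exact_mod_cast this
  have hk2 : k2 = m₂ := by
    have : (k2:ℝ) = (m₂:ℝ) := by linarith
    exact_mod_cast this
  -- common neighbor providers
  have hCN : ∀ x y : V, x ≠ y → ∃ w, G.Adj x w ∧ G.Adj y w := by
    intro x y hxy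
    have hcard : 0 < Fintype.card (G.commonNeighbors x y) := by
      by_cases hadj : G.Adj x y
      · rw [hsrg.of_adj x y hadj]; omega
      · rw [hsrg.of_not_adj hxy hadj]; omega
    obtain ⟨⟨w, hw⟩⟩ := Fintype.card_pos_iff.mp hcard
    rw [SimpleGraph.mem_commonNeighbors] at hw
    exact ⟨w, hw.1, hw.2⟩
  have hW3 : ∀ u v : V, ¬ G.Adj u v → ∃ w x, G.Adj u w ∧ G.Adj w x ∧ G.Adj x v := by
    intro u v hnadj
    rcases eq_or_ne u v with rfl | hne
    · have hdegu : 0 < G.degree u := by rw [hdeg]; omega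
      obtain ⟨w, hw⟩ := (G.degree_pos_iff_exists_adj u).mp hdegu
      have hcard : 0 < Fintype.card (G.commonNeighbors u w) := by
        rw [hsrg.of_adj u w hw]; omega
      obtain ⟨⟨x, hx⟩⟩ := Fintype.card_pos_iff.mp hcard
      rw [SimpleGraph.mem_commonNeighbors] at hx
      exact ⟨w, x, hw, hx.2, hx.1.symm⟩
    · obtain ⟨w, hw1, hw2⟩ := hCN u v hne
      have hcard : 0 < Fintype.card (G.commonNeighbors w v) := by
        rw [hsrg.of_adj w v hw2.symm]; omega
      obtain ⟨⟨x, hx⟩⟩ := Fintype.card_pos_iff.mp hcard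
      rw [SimpleGraph.mem_commonNeighbors] at hx
      exact ⟨w, x, hw1, hx.1, hx.2.symm⟩
  -- the distance matrix as a block matrix
  set P : Matrix V V ℝ := Matrix.of (fun u v => if u = v then (0:ℝ) else 2) with hPdef
  set Q : Matrix V V ℝ := Matrix.of (fun u v => if G.Adj u v then (1:ℝ) else 3) with hQdef
  have hDmat : distMatrix (_root_.bipartiteDoubleCover G) = Matrix.fromBlocks P Q Q P := by
    ext x y
    rcases x with u | u <;> rcases y with v | v
    · rcases eq_or_ne u v with rfl | hne
      · simp [distMatrix, hPdef]
      · simp [distMatrix, hPdef, dist_inl_inl G hCN hne, hne]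
    · by_cases hadj : G.Adj u v
      · simp [distMatrix, hQdef, dist_inl_inr_adj G hadj, hadj]
      · simp [distMatrix, hQdef, dist_inl_inr_not_adj G hadj (hW3 u v hadj), hadj]
    · by_cases hadj : G.Adj u v
      · simp [distMatrix, hQdef, dist_inr_inl_adj G hadj, hadj]
      · have hnadj' : ¬ G.Adj v u := fun h => hadj h.symm
        simp [distMatrix, hQdef, dist_inr_inl_not_adj G hadj (hW3 v u hnadj'), hadj]
    · rcases eq_or_ne u v with rfl | hne
      · simp [distMatrix, hPdef]
      · simp [distMatrix, hPdef, dist_inr_inr G hCN hne, hne]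
  -- quadratic expressions for the two halves
  have hPQ5 : P + Q = (5:ℝ) • Jm - (2:ℝ) • A - (2:ℝ) • (1 : Matrix V V ℝ) := by
    ext u v
    rcases eq_or_ne u v with rfl | hne
    · simp [hPdef, hQdef, hJmDef, hAdef]
      try norm_num
    · by_cases hadj : G.Adj u v
      · simp [hPdef, hQdef, hJmDef, hAdef, hne, hadj]
        try norm_num
      · simp [hPdef, hQdef, hJmDef, hAdef, hne, hadj]
        try norm_num
  have hPmQ5 : P - Q = -(1:ℝ) • Jm + (2:ℝ) • A - (2:ℝ) • (1 : Matrix V V ℝ) := by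
    ext u v
    rcases eq_or_ne u v with rfl | hne
    · simp [hPdef, hQdef, hJmDef, hAdef]
      try norm_num
    · by_cases hadj : G.Adj u v
      · simp [hPdef, hQdef, hJmDef, hAdef, hne, hadj]
        try norm_num
      · simp [hPdef, hQdef, hJmDef, hAdef, hne, hadj]
        try norm_num
  have hPQ : P + Q = ((5:ℝ)/c) • (A * A) + (-2 - 5 * ((a:ℝ) - c) / c) • A +
      (-2 - 5 * ((d:ℝ) - c) / c) • (1 : Matrix V V ℝ) := by
    rw [hPQ5, hA2]
    match_scalars <;> field_simp <;> ring
  have hPmQ : P - Q = (-(1:ℝ)/c) • (A * A) + (2 + ((a:ℝ) - c) / c) • A +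
      (-2 + ((d:ℝ) - c) / c) • (1 : Matrix V V ℝ) := by
    rw [hPmQ5, hA2]
    match_scalars <;> field_simp <;> ring
  -- value computations
  have hv1 : (5:ℝ)/c * (d:ℝ)^2 + (-2 - 5 * ((a:ℝ) - c) / c) * d + (-2 - 5 * ((d:ℝ) - c) / c) =
      -2 * (d:ℝ) + 5 * n - 2 := by
    field_simp
    linear_combination (5:ℝ) * hfeas
  have hv2 : (5:ℝ)/c * lam₁^2 + (-2 - 5 * ((a:ℝ) - c) / c) * lam₁ + (-2 - 5 * ((d:ℝ) - c) / c) =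
      -2 * lam₁ - 2 := by
    field_simp
    linear_combination (5:ℝ) * hroot1
  have hv3 : (5:ℝ)/c * lam₂^2 + (-2 - 5 * ((a:ℝ) - c) / c) * lam₂ + (-2 - 5 * ((d:ℝ) - c) / c) =
      -2 * lam₂ - 2 := by
    field_simp
    linear_combination (5:ℝ) * hroot2
  have hv4 : (-(1:ℝ)/c) * (d:ℝ)^2 + (2 + ((a:ℝ) - c) / c) * d + (-2 + ((d:ℝ) - c) / c) =
      2 * (d:ℝ) - n - 2 := by
    field_simp
    linear_combination (-1:ℝ) * hfeas
  have hv5 : (-(1:ℝ)/c) * lam₁^2 + (2 + ((a:ℝ) - c) / c) * lam₁ + (-2 + ((d:ℝ) - c) / c) =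
      2 * lam₁ - 2 := by
    field_simp
    linear_combination (-1:ℝ) * hroot1
  have hv6 : (-(1:ℝ)/c) * lam₂^2 + (2 + ((a:ℝ) - c) / c) * lam₂ + (-2 + ((d:ℝ) - c) / c) =
      2 * lam₂ - 2 := by
    field_simp
    linear_combination (-1:ℝ) * hroot2
  -- assemble
  rw [hDmat, aux_charpoly_PQQP, hPQ, hPmQ, aux_charpoly_quad A hA, aux_charpoly_quad A hA]
  rw [← heaDef]
  have hs1 := aux_filter_split ea (d:ℝ) lam₁ lam₂ hdl1 hdl2 hlne hcover
    (fun t => X - C ((5:ℝ)/c * t^2 + (-2 - 5 * ((a:ℝ) - c) / c) * t + (-2 - 5 * ((d:ℝ) - c) / c)))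
  have hs2' := aux_filter_split ea (d:ℝ) lam₁ lam₂ hdl1 hdl2 hlne hcover
    (fun t => X - C ((-(1:ℝ)/c) * t^2 + (2 + ((a:ℝ) - c) / c) * t + (-2 + ((d:ℝ) - c) / c)))
  rw [← hk0def, ← hk1def, ← hk2def] at hs1 hs2'
  rw [hs1, hs2', hv1, hv2, hv3, hv4, hv5, hv6, hk0, hk1, hk2, pow_one, pow_one]
  ring
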